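/- arXiv:2604.16197 — 2 statements merged into one kernel-verified Lean document; each statement's English description precedes it below -/
import Mathlib

section
/- Let (Ω, P) be a probability space, let L ≥ 1 be an integer, κ ∈ (0,1), C_x > 0, C_h > 0, and let W be a real V×d matrix. For each layer l ∈ {1,…,L}, let x_l : Ω → ℝ^d and δ_l : Ω → ℝ^d be random vectors with finite second moments, and let r : Ω → ℝ^V and h : Ω → ℝ^d be random vectors with finite fourth moments such that δ_L = W^⊤ r pointwise. Define G_l = ‖x_l‖₂²·‖δ_l‖₂² and G_head = ‖r‖₂²·‖h‖₂². Assume: (i) ‖x_l‖₂² ≤ C_x almost surely for every l; (ii) ‖h‖₂² ≥ C_h almost surely; (iii) E[‖δ_l‖₂²] ≤ κ^{2(L−l)} · E[‖δ_L‖₂²] for every l ∈ {1,…,L}. Then (1/L)·Σ_{l=1}^{L} E[G_l] ≤ (C_x · ‖W‖_op² · (1 − κ^{2L})) / (C_h · L · (1 − κ²)) · E[G_head]. In particular, if (1/L)·Σ_{l=1}^{L} E[G_l] > 0, then E[G_head] / ((1/L)·Σ_{l=1}^{L} E[G_l]) ≥ (C_h/C_x) · L(1 − κ²) / (‖W‖_op²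 · (1 − κ^{2L})). -/
/-!
Since `δ_L = Wᵀ r`, pointwise `‖δ_L‖² ≤ ‖W‖²‖r‖² ≤ (‖W‖²/C_h)‖r‖²‖h‖²`, so
`E‖δ_L‖² ≤ (‖W‖²/C_h) E[G_head]`. Bounding `‖x_l‖²` by `C_x` and applying the contraction
hypothesis gives `E[G_l] ≤ C_x (κ²)^(L-l) E‖δ_L‖²`; summing the geometric series yields the first
inequality, and the second is its reciprocal form.
-/

open MeasureTheory
open scoped BigOperators

/-- The operator norm (largest singular value) of a real `V×d` matrix, i.e. the
norm of the induced linear map between Euclidean spaces. -/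
noncomputable def matrixOpNorm {V d : ℕ} (W : Matrix (Fin V) (Fin d) ℝ) : ℝ :=
  ‖LinearMap.toContinuousLinearMap (Matrix.toEuclideanLin W)‖

open scoped Matrix

open scoped Matrix.Norms.L2Operator in
lemma matrixOpNorm_eq_norm {V d : ℕ} (W : Matrix (Fin V) (Fin d) ℝ) : matrixOpNorm W = ‖W‖ :=
  rfl

open scoped Matrix.Norms.L2Operator in
lemma norm_toLp_transpose_mulVec_le {V d : ℕ} (W : Matrix (Fin V) (Fin d) ℝ)
    (u : EuclideanSpace ℝ (Fin V)) :
    ‖WithLp.toLp 2 (Wᵀ *ᵥ u)‖ ≤ matrixOpNorm W * ‖u‖ := by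
  rw [matrixOpNorm_eq_norm, ← Matrix.l2_opNorm_conjTranspose,
    Matrix.conjTranspose_eq_transpose_of_trivial]
  exact Wᵀ.l2_opNorm_mulVec u

lemma sum_Icc_pow_sub {K : Type*} [DivisionRing K] {q : K} (hq : q ≠ 1) (L : ℕ) :
    ∑ l ∈ Finset.Icc 1 L, q ^ (L - l) = (1 - q ^ L) / (1 - q) := by
  rw [← Finset.Ico_add_one_right_eq_Icc, Finset.sum_Ico_reflect _ _ le_rfl, Nat.sub_self,
    Nat.add_sub_cancel, geom_sum_Ico' hq L.zero_le, pow_zero]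

lemma inv_le_div_of_le_mul {K : Type*} [Field K] [LinearOrder K] [IsStrictOrderedRing K]
    {a b c : K} (ha : 0 < a) (hb : 0 ≤ b) (h : a ≤ c * b) :
    c⁻¹ ≤ b / a := by
  have hc : 0 < c := pos_of_mul_pos_left (ha.trans_le h) hb
  rw [inv_le_iff_one_le_mul₀' hc, ← mul_div_assoc, le_div_iff₀ ha, one_mul]
  exact h

section Energy

variable {α : Type*} [MeasurableSpace α] {μ : Measure α}

lemma integrable_sq_norm_mul_sq_norm {E F : Type*} [NormedAddCommGroup E] [NormedAddCommGroup F]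
    {f : α → E} {g : α → F} (hf : MemLp f 4 μ) (hg : MemLp g 4 μ) :
    Integrable (fun a => ‖f a‖ ^ 2 * ‖g a‖ ^ 2) μ := by
  have hf4 : Integrable (fun a => ‖f a‖ ^ 4) μ := hf.integrable_norm_pow (by norm_num)
  have hg4 : Integrable (fun a => ‖g a‖ ^ 4) μ := hg.integrable_norm_pow (by norm_num)
  refine ((hf4.add hg4).div_const 2).mono' ((hf.1.norm.pow 2).mul (hg.1.norm.pow 2))
    (ae_of_all _ fun a => ?_)
  rw [Real.norm_of_nonneg (by positivity)]
  change _ ≤ (‖f a‖ ^ 4 + ‖g a‖ ^ 4) / 2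
  nlinarith [sq_nonneg (‖f a‖ ^ 2 - ‖g a‖ ^ 2)]

lemma integral_mul_le_mul_integral_of_ae_le {f g : α → ℝ} {C : ℝ} (hfC : ∀ᵐ a ∂μ, f a ≤ C)
    (hf : 0 ≤ f) (hg : 0 ≤ g) (hg_int : Integrable g μ) :
    ∫ a, f a * g a ∂μ ≤ C * ∫ a, g a ∂μ := by
  rw [← integral_const_mul]
  refine integral_mono_of_nonneg (ae_of_all _ fun a => mul_nonneg (hf a) (hg a))
    (hg_int.const_mul C) ?_
  filter_upwards [hfC] with a ha using mul_le_mul_of_nonneg_right ha (hg a)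

lemma integral_sq_norm_le_of_norm_le_mul {E F G : Type*} [NormedAddCommGroup E]
    [NormedAddCommGroup F] [NormedAddCommGroup G] {y : α → E} {u : α → F} {h : α → G} {M c : ℝ}
    (hc : 0 < c) (hy : ∀ a, ‖y a‖ ≤ M * ‖u a‖) (hh : ∀ᵐ a ∂μ, c ≤ ‖h a‖ ^ 2)
    (hint : Integrable (fun a => ‖u a‖ ^ 2 * ‖h a‖ ^ 2) μ) :
    ∫ a, ‖y a‖ ^ 2 ∂μ ≤ M ^ 2 / c * ∫ a, ‖u a‖ ^ 2 * ‖h a‖ ^ 2 ∂μ := by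
  rw [← integral_const_mul]
  refine integral_mono_of_nonneg (ae_of_all _ fun a => sq_nonneg _) (hint.const_mul _) ?_
  filter_upwards [hh] with a ha
  calc ‖y a‖ ^ 2 ≤ (M * ‖u a‖) ^ 2 := pow_le_pow_left₀ (norm_nonneg _) (hy a) 2
    _ = M ^ 2 / c * (c * ‖u a‖ ^ 2) := by field_simp
    _ ≤ M ^ 2 / c * (‖u a‖ ^ 2 * ‖h a‖ ^ 2) := by rw [mul_comm c]; gcongr

end Energy

theorem head_to_average_energy_ratio_general
    {Ω : Type*} [MeasurableSpace Ω] (P : Measure Ω) [IsProbabilityMeasure P]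
    (V d L : ℕ) (κ Cx Ch : ℝ)
    (hκ : κ ∈ Set.Ioo (0 : ℝ) 1) (hCx : 0 < Cx) (hCh : 0 < Ch)
    (W : Matrix (Fin V) (Fin d) ℝ)
    (x δ : ℕ → Ω → EuclideanSpace ℝ (Fin d))
    (r : Ω → EuclideanSpace ℝ (Fin V)) (h : Ω → EuclideanSpace ℝ (Fin d))
    (hδ2 : ∀ l ∈ Finset.Icc 1 L, MemLp (δ l) 2 P)
    (hr4 : MemLp r 4 P) (hh4 : MemLp h 4 P)
    (hδL : ∀ ω, δ L ω = fun j => ∑ v, W v j * r ω v)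
    (hxbound : ∀ l ∈ Finset.Icc 1 L, ∀ᵐ ω ∂P, ‖x l ω‖ ^ 2 ≤ Cx)
    (hhbound : ∀ᵐ ω ∂P, Ch ≤ ‖h ω‖ ^ 2)
    (hcontract : ∀ l ∈ Finset.Icc 1 L,
      (∫ ω, ‖δ l ω‖ ^ 2 ∂P) ≤ κ ^ (2 * (L - l)) * ∫ ω, ‖δ L ω‖ ^ 2 ∂P) :
    ((1 / (L : ℝ)) * ∑ l ∈ Finset.Icc 1 L, ∫ ω, ‖x l ω‖ ^ 2 * ‖δ l ω‖ ^ 2 ∂P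
        ≤ (Cx * matrixOpNorm W ^ 2 * (1 - κ ^ (2 * L))) / (Ch * L * (1 - κ ^ 2))
            * ∫ ω, ‖r ω‖ ^ 2 * ‖h ω‖ ^ 2 ∂P)
    ∧ ((0 < (1 / (L : ℝ)) * ∑ l ∈ Finset.Icc 1 L, ∫ ω, ‖x l ω‖ ^ 2 * ‖δ l ω‖ ^ 2 ∂P) →
        (Ch / Cx) * ((L : ℝ) * (1 - κ ^ 2)) / (matrixOpNorm W ^ 2 * (1 - κ ^ (2 * L)))
          ≤ (∫ ω, ‖r ω‖ ^ 2 * ‖h ω‖ ^ 2 ∂P)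
              / ((1 / (L : ℝ)) * ∑ l ∈ Finset.Icc 1 L, ∫ ω, ‖x l ω‖ ^ 2 * ‖δ l ω‖ ^ 2 ∂P)) := by
  obtain ⟨hκ0, hκ1⟩ := hκ
  set M := matrixOpNorm W
  set B := ∫ ω, ‖r ω‖ ^ 2 * ‖h ω‖ ^ 2 ∂P
  have hhead : ∫ ω, ‖δ L ω‖ ^ 2 ∂P ≤ M ^ 2 / Ch * B := by
    refine integral_sq_norm_le_of_norm_le_mul hCh (fun ω => ?_) hhbound
      (integrable_sq_norm_mul_sq_norm hr4 hh4)
    have : δ L ω = WithLp.toLp 2 (Wᵀ *ᵥ r ω) := by ext j; exact congrFun (hδL ω) j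
    exact this ▸ norm_toLp_transpose_mulVec_le W (r ω)
  have hlayer : ∀ l ∈ Finset.Icc 1 L, ∫ ω, ‖x l ω‖ ^ 2 * ‖δ l ω‖ ^ 2 ∂P
      ≤ Cx * (M ^ 2 / Ch * B) * (κ ^ 2) ^ (L - l) := fun l hl =>
    calc _ ≤ Cx * ∫ ω, ‖δ l ω‖ ^ 2 ∂P :=
          integral_mul_le_mul_integral_of_ae_le (hxbound l hl) (fun _ => sq_nonneg _)
            (fun _ => sq_nonneg _) ((hδ2 l hl).integrable_norm_pow two_ne_zero)
      _ ≤ Cx * (κ ^ (2 * (L - l)) * (M ^ 2 / Ch * B)) := by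
          gcongr; exact (hcontract l hl).trans (by gcongr)
      _ = _ := by rw [pow_mul]; ring
  have hκ2 : κ ^ 2 < 1 := pow_lt_one₀ hκ0.le hκ1 two_ne_zero
  have havg : (1 / (L : ℝ)) * ∑ l ∈ Finset.Icc 1 L, ∫ ω, ‖x l ω‖ ^ 2 * ‖δ l ω‖ ^ 2 ∂P
      ≤ (Cx * M ^ 2 * (1 - κ ^ (2 * L))) / (Ch * L * (1 - κ ^ 2)) * B := calc
    _ ≤ (1 / L) * ∑ l ∈ Finset.Icc 1 L, Cx * (M ^ 2 / Ch * B) * (κ ^ 2) ^ (L - l) := by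
        gcongr with l hl; exact hlayer l hl
    _ = _ := by
        rw [← Finset.mul_sum, sum_Icc_pow_sub hκ2.ne, ← pow_mul]
        simp only [div_eq_mul_inv, mul_inv]; ring
  refine ⟨havg, fun hpos => ?_⟩
  have hreciprocal : Ch / Cx * (L * (1 - κ ^ 2)) / (M ^ 2 * (1 - κ ^ (2 * L)))
      = ((Cx * M ^ 2 * (1 - κ ^ (2 * L))) / (Ch * L * (1 - κ ^ 2)))⁻¹ := by
    simp only [div_eq_mul_inv, mul_inv, inv_inv]; ring
  rw [hreciprocal]
  exact inv_le_div_of_le_mul hpos (integral_nonneg fun ω => by positivity) havg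

/-- Depth amplifies the head-to-average gradient-energy gap:
with `G_l = ‖x_l‖²·‖δ_l‖²`, `G_head = ‖r‖²·‖h‖²`, `δ_L = W^⊤ r`, norm stability
(`‖x_l‖² ≤ C_x` a.s., `‖h‖² ≥ C_h` a.s.) and expected backprop contraction
(`E‖δ_l‖² ≤ κ^{2(L-l)} E‖δ_L‖²`), one has
`(1/L)·∑_l E[G_l] ≤ (C_x·‖W‖_op²·(1-κ^{2L}))/(C_h·L·(1-κ²))·E[G_head]`, and if
the average internal energy is positive then
`E[G_head] / ((1/L)·∑_l E[G_l]) ≥ (C_h/C_x)·L(1-κ²)/(‖W‖_op²·(1-κ^{2L}))`. -/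
theorem head_to_average_energy_ratio
    {Ω : Type*} [MeasurableSpace Ω] (P : Measure Ω) [IsProbabilityMeasure P]
    (V d L : ℕ) (hL : 1 ≤ L) (κ Cx Ch : ℝ)
    (hκ : κ ∈ Set.Ioo (0 : ℝ) 1) (hCx : 0 < Cx) (hCh : 0 < Ch)
    (W : Matrix (Fin V) (Fin d) ℝ)
    (x δ : ℕ → Ω → EuclideanSpace ℝ (Fin d))
    (r : Ω → EuclideanSpace ℝ (Fin V)) (h : Ω → EuclideanSpace ℝ (Fin d))
    (hx2 : ∀ l ∈ Finset.Icc 1 L, MemLp (x l) 2 P)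
    (hδ2 : ∀ l ∈ Finset.Icc 1 L, MemLp (δ l) 2 P)
    (hr4 : MemLp r 4 P) (hh4 : MemLp h 4 P)
    (hδL : ∀ ω, δ L ω = fun j => ∑ v, W v j * r ω v)
    (hxbound : ∀ l ∈ Finset.Icc 1 L, ∀ᵐ ω ∂P, ‖x l ω‖ ^ 2 ≤ Cx)
    (hhbound : ∀ᵐ ω ∂P, Ch ≤ ‖h ω‖ ^ 2)
    (hcontract : ∀ l ∈ Finset.Icc 1 L,
      (∫ ω, ‖δ l ω‖ ^ 2 ∂P) ≤ κ ^ (2 * (L - l)) * ∫ ω, ‖δ L ω‖ ^ 2 ∂P) :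
    ((1 / (L : ℝ)) * ∑ l ∈ Finset.Icc 1 L, ∫ ω, ‖x l ω‖ ^ 2 * ‖δ l ω‖ ^ 2 ∂P
        ≤ (Cx * matrixOpNorm W ^ 2 * (1 - κ ^ (2 * L))) / (Ch * L * (1 - κ ^ 2))
            * ∫ ω, ‖r ω‖ ^ 2 * ‖h ω‖ ^ 2 ∂P)
    ∧ ((0 < (1 / (L : ℝ)) * ∑ l ∈ Finset.Icc 1 L, ∫ ω, ‖x l ω‖ ^ 2 * ‖δ l ω‖ ^ 2 ∂P) →
        (Ch / Cx) * ((L : ℝ) * (1 - κ ^ 2)) / (matrixOpNorm W ^ 2 * (1 - κ ^ (2 * L)))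
          ≤ (∫ ω, ‖r ω‖ ^ 2 * ‖h ω‖ ^ 2 ∂P)
              / ((1 / (L : ℝ)) * ∑ l ∈ Finset.Icc 1 L, ∫ ω, ‖x l ω‖ ^ 2 * ‖δ l ω‖ ^ 2 ∂P)) :=
  head_to_average_energy_ratio_general P V d L κ Cx Ch hκ hCx hCh W x δ r h hδ2 hr4 hh4 hδL hxbound
    hhbound hcontract
end

section
/- Let D, K be positive integers and consider the random CountSketch model. Then for any fixed x, y ∈ ℝ^D, the variance of the sketched inner product satisfies Var[⟨CS(x), CS(y)⟩] ≤ (1/K)·(‖x‖₂²·‖y‖₂² + (x^⊤ y)²). -/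
open MeasureTheory ProbabilityTheory
open scoped BigOperators

/-- The random CountSketch model on a probability space `(Ω, P)`: a random bucket
hash `η : Fin D → Fin K` and random signs `s : Fin D → {−1,+1}` such that the
signs are mutually independent and uniform on `{−1,+1}`, the bucket hash is
independent of the signs, and `P(η(i) = η(j)) = 1/K` for all `i ≠ j`. -/
structure CountSketchModel (Ω : Type*) [MeasurableSpace Ω] (P : MeasureTheory.Measure Ω)
    (D K : ℕ) where
  η : Ω → Fin D → Fin K
  s : Ω → Fin D → ℝ
  meas_η : Measurable η
  meas_s : Measurable s
  sign_val : ∀ ω i, s ω i = 1 ∨ s ω i = -1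
  sign_prob : ∀ i, P {ω | s ω i = 1} = 1 / 2
  sign_indep : iIndepFun (fun i ω => s ω i) P
  hash_indep_sign : IndepFun η s P
  collision : ∀ i j, i ≠ j → P {ω | η ω i = η ω j} = (K : ENNReal)⁻¹

/-- The CountSketch of `x ∈ ℝ^D`: `CS(x)_k = ∑_{i : η(i) = k} s(i)·x_i`. -/
def CountSketchModel.CS {Ω : Type*} [MeasurableSpace Ω] {P : MeasureTheory.Measure Ω}
    {D K : ℕ} (M : CountSketchModel Ω P D K) (ω : Ω) (x : Fin D → ℝ) :
    Fin K → ℝ :=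
  fun k => ∑ i, if M.η ω i = k then M.s ω i * x i else 0

/-- The variance `Var[f] = E[f²] - (E[f])²` of a real random variable. -/
noncomputable def var {Ω : Type*} [MeasurableSpace Ω] (P : Measure Ω) (f : Ω → ℝ) : ℝ :=
  (∫ ω, f ω ^ 2 ∂P) - (∫ ω, f ω ∂P) ^ 2

/-!
Since `s_i² = 1`, `⟨CS(x), CS(y)⟩ = x ⬝ y + ∑_{i ≠ j} Z_{ij}` with
`Z_{ij} = x_i y_j [η i = η j] s_i s_j`, so the variance is `E[(∑_{i ≠ j} Z_{ij})²]`. As the hash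
is independent of the signs, `E[Z_{ij} Z_{kl}]` factors through `E[s_i s_j s_k s_l]`, the mean of
the product of the signs over the symmetric difference of `{i, j}` and `{k, l}`; it vanishes
unless `(k, l)` is `(i, j)` or `(j, i)`, and then `E[Z_{ij} Z_{kl}] = x_i y_j x_k y_l / K`.
Hence the variance is `K⁻¹ ∑_{i ≠ j} x_i y_j (x_i y_j + x_j y_i)`, and adding the nonnegative
diagonal terms `2 (x_i y_i)²` gives `K⁻¹ (‖x‖² ‖y‖² + (x ⬝ y)²)`.
-/

open Finset

theorem Finset.prod_mul_prod_eq_prod_symmDiff {ι M : Type*} [DecidableEq ι] [CommMonoid M]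
    {f : ι → M} (hf : ∀ i, f i * f i = 1) (A B : Finset ι) :
    (∏ i ∈ A, f i) * ∏ i ∈ B, f i = ∏ i ∈ symmDiff A B, f i := by
  rw [symmDiff_def, sup_eq_union, prod_union disjoint_sdiff_sdiff, ← prod_inter_mul_prod_sdiff A B,
    ← prod_inter_mul_prod_sdiff B A, inter_comm B A]
  have hsq : (∏ i ∈ A ∩ B, f i) * ∏ i ∈ A ∩ B, f i = 1 := by
    rw [← prod_mul_distrib]; exact prod_eq_one fun i _ => hf i
  calc _ = ((∏ i ∈ A ∩ B, f i) * ∏ i ∈ A ∩ B, f i) * ((∏ i ∈ A \ B, f i) * ∏ i ∈ B \ A, f i) := by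
        ac_rfl
    _ = _ := by rw [hsq, one_mul]

theorem Finset.sum_offDiag_le_sum_product {ι : Type*} [DecidableEq ι] (s : Finset ι)
    {f : ι × ι → ℝ} (hf : ∀ i ∈ s, 0 ≤ f (i, i)) : ∑ p ∈ s.offDiag, f p ≤ ∑ p ∈ s ×ˢ s, f p := by
  rw [← diag_union_offDiag, sum_union (disjoint_diag_offDiag s), sum_diag]
  exact le_add_of_nonneg_left (sum_nonneg hf)

section
variable {Ω : Type*} [MeasurableSpace Ω] {P : Measure Ω}

theorem ProbabilityTheory.iIndepFun.integral_finset_prod_eq_zero {ι : Type*} {X : ι → Ω → ℝ}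
    (hX : iIndepFun X P) (hmeas : ∀ i, Measurable (X i)) (hmean : ∀ i, ∫ ω, X i ω ∂P = 0)
    {T : Finset ι} (hT : T.Nonempty) : ∫ ω, ∏ i ∈ T, X i ω ∂P = 0 := by
  classical
  obtain ⟨a, ha⟩ := hT
  have hind : IndepFun (fun ω => ∏ i ∈ T.erase a, X i ω) (X a) P := by
    simpa only [← prod_fn] using hX.indepFun_finsetProd_of_notMem hmeas (notMem_erase a T)
  have := hind.integral_fun_mul_eq_mul_integral
    (Finset.measurable_prod _ fun i _ => hmeas i).aestronglyMeasurable
    (hmeas a).aestronglyMeasurable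
  simp_rw [← mul_prod_erase T _ ha, mul_comm (X a _)]
  simpa [hmean a] using this

theorem var_eq_variance [IsProbabilityMeasure P] {f : Ω → ℝ} (hf : MemLp f 2 P) :
    var P f = Var[f; P] := by
  rw [variance_eq_sub hf]
  rfl

theorem integral_sq_finsetSum {ι : Type*} (T : Finset ι) {Z : ι → Ω → ℝ}
    (hZ : ∀ p ∈ T, MemLp (Z p) 2 P) :
    ∫ ω, (∑ p ∈ T, Z p ω) ^ 2 ∂P = ∑ p ∈ T, ∑ q ∈ T, ∫ ω, Z p ω * Z q ω ∂P := by
  have hint : ∀ p ∈ T, ∀ q ∈ T, Integrable (fun ω => Z p ω * Z q ω) P :=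
    fun p hp q hq => (hZ p hp).integrable_mul (hZ q hq)
  simp_rw [sq, sum_mul_sum]
  rw [integral_finsetSum _ fun p hp => integrable_finsetSum _ fun q hq => hint p hp q hq]
  exact sum_congr rfl fun p hp => integral_finsetSum _ fun q hq => hint p hp q hq

end

def bucketMatch {ι β : Type*} [DecidableEq β] (p : ι × ι) (h : ι → β) : ℝ :=
  if h p.1 = h p.2 then 1 else 0

def signPair {ι : Type*} (p : ι × ι) (σ : ι → ℝ) : ℝ := σ p.1 * σ p.2

def varianceWeight {ι : Type*} (x y : ι → ℝ) (p : ι × ι) : ℝ :=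
  x p.1 * y p.2 * (x p.1 * y p.2 + x p.2 * y p.1)

lemma sum_varianceWeight {ι : Type*} [Fintype ι] (x y : ι → ℝ) :
    ∑ p : ι × ι, varianceWeight x y p = (∑ i, x i ^ 2) * (∑ i, y i ^ 2) + (∑ i, x i * y i) ^ 2 := by
  simp only [varianceWeight, mul_add, sum_add_distrib, Fintype.sum_prod_type, sq, sum_mul_sum]
  congr 1 <;> exact sum_congr rfl fun i _ => sum_congr rfl fun j _ => by ring

lemma signPair_swap {ι : Type*} (p : ι × ι) (σ : ι → ℝ) : signPair p.swap σ = signPair p σ :=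
  mul_comm _ _

lemma measurable_signPair {ι : Type*} (p : ι × ι) : Measurable (signPair p) := by
  unfold signPair; fun_prop

lemma bucketMatch_swap {ι β : Type*} [DecidableEq β] (p : ι × ι) (h : ι → β) :
    bucketMatch p.swap h = bucketMatch p h := by
  simp only [bucketMatch, Prod.fst_swap, Prod.snd_swap, eq_comm]

lemma bucketMatch_mul_self {ι β : Type*} [DecidableEq β] (p : ι × ι) (h : ι → β) :
    bucketMatch p h * bucketMatch p h = bucketMatch p h := by
  unfold bucketMatch; split_ifs <;> norm_num

namespace CountSketchModel

variable {Ω : Type*} [MeasurableSpace Ω] {P : Measure Ω} {D K : ℕ}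
  (M : CountSketchModel Ω P D K)

lemma abs_sign (ω : Ω) (i : Fin D) : |M.s ω i| = 1 := by
  rcases M.sign_val ω i with h | h <;> simp [h]

lemma sign_mul_self (ω : Ω) (i : Fin D) : M.s ω i * M.s ω i = 1 := by
  rw [← abs_mul_abs_self, M.abs_sign, one_mul]

lemma signPair_mul_self (ω : Ω) (p : Fin D × Fin D) :
    signPair p (M.s ω) * signPair p (M.s ω) = 1 := by
  rw [signPair, mul_mul_mul_comm, M.sign_mul_self, M.sign_mul_self, one_mul]

lemma measurable_sign (i : Fin D) : Measurable fun ω => M.s ω i :=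
  (measurable_pi_apply i).comp M.meas_s

lemma integral_sign [IsProbabilityMeasure P] (i : Fin D) : ∫ ω, M.s ω i ∂P = 0 := by
  have hA : MeasurableSet {ω | M.s ω i = 1} := M.measurable_sign i (measurableSet_singleton 1)
  have hs : (fun ω => M.s ω i) = fun ω => {ω | M.s ω i = 1}.indicator 2 ω - 1 := by
    ext ω
    rcases M.sign_val ω i with h | h <;> norm_num [h, Set.indicator]
  rw [hs, integral_sub ((integrable_const 2).indicator hA) (integrable_const 1),
    integral_indicator hA]
  simp [measureReal_def, M.sign_prob i]

lemma integral_signPair [IsProbabilityMeasure P] {p : Fin D × Fin D} (hp : p.1 ≠ p.2) :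
    ∫ ω, signPair p (M.s ω) ∂P = 0 := by
  simp_rw [signPair, ← prod_pair hp]
  exact M.sign_indep.integral_finset_prod_eq_zero M.measurable_sign M.integral_sign
    (insert_nonempty _ _)

lemma integral_signPair_mul_signPair [IsProbabilityMeasure P] {p q : Fin D × Fin D}
    (hp : p.1 ≠ p.2) (hq : q.1 ≠ q.2) :
    ∫ ω, signPair p (M.s ω) * signPair q (M.s ω) ∂P
      = (if q = p then 1 else 0) + (if q = p.swap then 1 else 0) := by
  have hswap : p.swap ≠ p := fun h => hp (congrArg Prod.snd h)
  rcases eq_or_ne q p with rfl | hqp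
  · simp [M.signPair_mul_self, hswap.symm]
  rcases eq_or_ne q p.swap with rfl | hqs
  · simp [signPair_swap, M.signPair_mul_self, hswap]
  rw [if_neg hqp, if_neg hqs, add_zero]
  have hprod : ∀ ω, signPair p (M.s ω) * signPair q (M.s ω)
      = ∏ i ∈ symmDiff {p.1, p.2} {q.1, q.2}, M.s ω i := fun ω => by
    rw [← prod_mul_prod_eq_prod_symmDiff (M.sign_mul_self ω), prod_pair hp, prod_pair hq]
    rfl
  simp_rw [hprod]
  refine M.sign_indep.integral_finset_prod_eq_zero M.measurable_sign M.integral_sign ?_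
  rw [nonempty_iff_ne_empty, ← bot_eq_empty, Ne, symmDiff_eq_bot, ← coe_inj, coe_pair, coe_pair,
    Set.pair_eq_pair_iff]
  rintro (⟨h₁, h₂⟩ | ⟨h₁, h₂⟩)
  · exact hqp (Prod.ext h₁.symm h₂.symm)
  · exact hqs (Prod.ext h₂.symm h₁.symm)

lemma integral_bucketMatch {p : Fin D × Fin D} (hp : p.1 ≠ p.2) :
    ∫ ω, bucketMatch p (M.η ω) ∂P = (K : ℝ)⁻¹ := by
  have hA : MeasurableSet {ω | M.η ω p.1 = M.η ω p.2} :=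
    measurableSet_eq_fun ((measurable_pi_apply _).comp M.meas_η)
      ((measurable_pi_apply _).comp M.meas_η)
  have hb : (fun ω => bucketMatch p (M.η ω)) = {ω | M.η ω p.1 = M.η ω p.2}.indicator 1 := by
    ext ω; simp [bucketMatch, Set.indicator]
  rw [hb, integral_indicator_one hA, measureReal_def, M.collision _ _ hp]
  simp

end CountSketchModel

namespace CountSketchModel

variable {Ω : Type*} [MeasurableSpace Ω] {P : Measure Ω} {D K : ℕ}
  (M : CountSketchModel Ω P D K) (x y : Fin D → ℝ)

def pairTerm (p : Fin D × Fin D) (ω : Ω) : ℝ :=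
  x p.1 * y p.2 * (bucketMatch p (M.η ω) * signPair p (M.s ω))

lemma integral_hash_mul_sign (φ : (Fin D → Fin K) → ℝ) (ψ : (Fin D → ℝ) → ℝ)
    (hψ : Measurable ψ) :
    ∫ ω, φ (M.η ω) * ψ (M.s ω) ∂P = (∫ ω, φ (M.η ω) ∂P) * ∫ ω, ψ (M.s ω) ∂P :=
  (M.hash_indep_sign.comp .of_discrete hψ).integral_fun_mul_eq_mul_integral
    (Measurable.of_discrete.comp M.meas_η).aestronglyMeasurable
    (hψ.comp M.meas_s).aestronglyMeasurable

lemma integral_pairTerm [IsProbabilityMeasure P] {p : Fin D × Fin D} (hp : p.1 ≠ p.2) :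
    ∫ ω, M.pairTerm x y p ω ∂P = 0 := by
  simp only [pairTerm]
  rw [integral_const_mul, M.integral_hash_mul_sign _ _ (measurable_signPair p),
    M.integral_signPair hp, mul_zero, mul_zero]

lemma integral_pairTerm_mul_pairTerm [IsProbabilityMeasure P] {p q : Fin D × Fin D}
    (hp : p.1 ≠ p.2) (hq : q.1 ≠ q.2) :
    ∫ ω, M.pairTerm x y p ω * M.pairTerm x y q ω ∂P
      = (K : ℝ)⁻¹ * (x p.1 * y p.2) * (x q.1 * y q.2)
          * ((if q = p then 1 else 0) + (if q = p.swap then 1 else 0)) := by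
  have hfactor : ∀ ω, M.pairTerm x y p ω * M.pairTerm x y q ω
      = (x p.1 * y p.2) * (x q.1 * y q.2) * ((fun h => bucketMatch p h * bucketMatch q h) (M.η ω)
          * (fun σ => signPair p σ * signPair q σ) (M.s ω)) := fun ω => by
    simp only [pairTerm]; ring
  simp_rw [hfactor]
  rw [integral_const_mul, M.integral_hash_mul_sign (fun h => bucketMatch p h * bucketMatch q h)
    (fun σ => signPair p σ * signPair q σ)
    ((measurable_signPair p).mul (measurable_signPair q)), M.integral_signPair_mul_signPair hp hq]
  have hswap : p.swap ≠ p := fun h => hp (congrArg Prod.snd h)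
  rcases eq_or_ne q p with rfl | hqp
  · simp [bucketMatch_mul_self, M.integral_bucketMatch hq, hswap.symm]
    ring
  rcases eq_or_ne q p.swap with rfl | hqs
  · simp [bucketMatch_swap, bucketMatch_mul_self, M.integral_bucketMatch hp, hswap]
    ring
  simp [hqp, hqs]

lemma measurable_pairTerm (p : Fin D × Fin D) : Measurable (M.pairTerm x y p) :=
  measurable_const.mul (((Measurable.of_discrete (f := bucketMatch p)).comp M.meas_η).mul
    ((measurable_signPair p).comp M.meas_s))

lemma memLp_pairTerm (p : Fin D × Fin D) : MemLp (M.pairTerm x y p) ⊤ P := by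
  refine memLp_top_of_bound (M.measurable_pairTerm x y p).aestronglyMeasurable |x p.1 * y p.2|
    (.of_forall fun ω => ?_)
  have hb : |bucketMatch p (M.η ω)| ≤ 1 := by unfold bucketMatch; split_ifs <;> norm_num
  have hσ : |signPair p (M.s ω)| = 1 := by
    rw [signPair, abs_mul, M.abs_sign, M.abs_sign, one_mul]
  rw [Real.norm_eq_abs, pairTerm, abs_mul, abs_mul (bucketMatch _ _), hσ, mul_one]
  exact mul_le_of_le_one_right (abs_nonneg _) hb

lemma sum_CS_mul_CS (ω : Ω) :
    ∑ k, M.CS ω x k * M.CS ω y k = ∑ i, x i * y i + ∑ p ∈ univ.offDiag, M.pairTerm x y p ω := by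
  have hexpand : ∑ k, M.CS ω x k * M.CS ω y k = ∑ p ∈ univ ×ˢ univ, M.pairTerm x y p ω := by
    simp only [CS, pairTerm, bucketMatch, signPair, sum_mul_sum, sum_product]
    rw [sum_comm]
    refine sum_congr rfl fun i _ => ?_
    rw [sum_comm]
    refine sum_congr rfl fun j _ => ?_
    simp only [ite_mul, zero_mul, sum_ite_eq, mem_univ, if_true, eq_comm (a := M.η ω j)]
    split_ifs <;> ring
  rw [hexpand, ← diag_union_offDiag, sum_union (disjoint_diag_offDiag _), sum_diag]
  congr 1
  refine sum_congr rfl fun i _ => ?_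
  simp [pairTerm, bucketMatch, signPair, M.sign_mul_self]

lemma integral_sq_sum_pairTerm [IsProbabilityMeasure P] :
    ∫ ω, (∑ p ∈ univ.offDiag, M.pairTerm x y p ω) ^ 2 ∂P
      = (K : ℝ)⁻¹ * ∑ p ∈ univ.offDiag, varianceWeight x y p := by
  rw [integral_sq_finsetSum _ fun p _ => (M.memLp_pairTerm x y p).mono_exponent le_top, mul_sum]
  refine sum_congr rfl fun p hp => ?_
  have hp' : p.1 ≠ p.2 := (mem_offDiag.1 hp).2.2
  have hswap : p.swap ∈ univ.offDiag := by simpa using hp'.symm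
  rw [sum_congr rfl fun q hq => M.integral_pairTerm_mul_pairTerm x y hp' (mem_offDiag.1 hq).2.2]
  simp only [mul_add, mul_ite, mul_one, mul_zero, sum_add_distrib, sum_ite_eq', hp, hswap,
    if_true, Prod.fst_swap, Prod.snd_swap, varianceWeight]
  ring

lemma var_sum_CS_mul_CS [IsProbabilityMeasure P] :
    var P (fun ω => ∑ k, M.CS ω x k * M.CS ω y k)
      = (K : ℝ)⁻¹ * ∑ p ∈ univ.offDiag, varianceWeight x y p := by
  have hW : MemLp (fun ω => ∑ p ∈ univ.offDiag, M.pairTerm x y p ω) 2 P :=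
    memLp_finsetSum _ fun p _ => (M.memLp_pairTerm x y p).mono_exponent le_top
  have hmean : ∫ ω, ∑ p ∈ univ.offDiag, M.pairTerm x y p ω ∂P = 0 := by
    rw [integral_finsetSum _ fun p _ => (M.memLp_pairTerm x y p).integrable le_top]
    exact sum_eq_zero fun p hp => M.integral_pairTerm x y (mem_offDiag.1 hp).2.2
  simp_rw [M.sum_CS_mul_CS]
  have hshift : MemLp (fun ω => ∑ i, x i * y i + ∑ p ∈ univ.offDiag, M.pairTerm x y p ω) 2 P :=
    (memLp_const (∑ i, x i * y i)).add hW
  rw [var_eq_variance hshift, variance_const_add hW.1,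
    variance_of_integral_eq_zero hW.1.aemeasurable hmean, M.integral_sq_sum_pairTerm]

end CountSketchModel

theorem countSketch_inner_product_variance_bound_general
    {Ω : Type*} [MeasurableSpace Ω] (P : Measure Ω) [IsProbabilityMeasure P]
    (D K : ℕ)
    (M : CountSketchModel Ω P D K) (x y : Fin D → ℝ) :
    var P (fun ω => ∑ k, M.CS ω x k * M.CS ω y k)
      ≤ (1 / K) * ((∑ i, x i ^ 2) * (∑ i, y i ^ 2) + (∑ i, x i * y i) ^ 2) := by
  have hdiag : ∀ i ∈ (univ : Finset (Fin D)), 0 ≤ varianceWeight x y (i, i) := fun i _ => by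
    simp only [varianceWeight]; nlinarith [mul_self_nonneg (x i * y i)]
  rw [M.var_sum_CS_mul_CS, one_div, ← sum_varianceWeight, ← univ_product_univ]
  exact mul_le_mul_of_nonneg_left (sum_offDiag_le_sum_product _ hdiag) (by positivity)

/-- Under the random CountSketch model, for any fixed
`x, y ∈ ℝ^D`, the variance of the sketched inner product satisfies
`Var[⟨CS(x), CS(y)⟩] ≤ (1/K)·(‖x‖₂²·‖y‖₂² + (x^⊤ y)²)`. -/
theorem countSketch_inner_product_variance_bound
    {Ω : Type*} [MeasurableSpace Ω] (P : Measure Ω) [IsProbabilityMeasure P]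
    (D K : ℕ) (hD : 0 < D) (hK : 0 < K)
    (M : CountSketchModel Ω P D K) (x y : Fin D → ℝ) :
    var P (fun ω => ∑ k, M.CS ω x k * M.CS ω y k)
      ≤ (1 / K) * ((∑ i, x i ^ 2) * (∑ i, y i ^ 2) + (∑ i, x i * y i) ^ 2) :=
  countSketch_inner_product_variance_bound_general P D K M x y
end
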